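/- For a compactly supported probability measure μ and 2θ in the image H_μ([λ_min,λ_max]^c), with v = R_μ(2θ), the identity θv - (1/2)∫ log(1 - 2θλ + 2θv) dμ(λ) = (1/2)∫₀^{2θ} R_μ(u) du holds. -/

import Mathlib

/-!
Let `H` be the Hilbert transform of `μ`, `L(x) = ∫ log (x - λ) dμ(λ)` its logarithmic potential
(so `L' = H` to the right of the support) and `K` the inverse of `H` on `(0, 2θ]`. The function
`Ψ(γ) = γ K(γ) - log γ - L(K(γ))` has derivative `K + γ K' - γ⁻¹ - H(K) K' = K(γ) - γ⁻¹ = R(γ)`.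
As `γ → 0⁺` we have `γ K(γ) = 1 + γ R(γ) → 1` because `R(γ) ∈ [λ_min, λ_max]`, and
`log γ + L(K(γ)) = ∫ log (γ (K(γ) - λ)) dμ(λ) → 0`, so `Ψ(0⁺) = 1`. Hence
`∫₀^{2θ} R = Ψ(2θ) - 1`, which is twice the left-hand side. For `θ < 0` the hypothesis at `γ = 0`
is contradictory, since `H` does not vanish off `[λ_min, λ_max]`.
-/

open MeasureTheory Set intervalIntegral Filter Topology

theorem StrictAntiOn.continuousOn_of_leftInvOn {α β : Type*} [LinearOrder α] [TopologicalSpace α]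
    [OrderTopology α] [DenselyOrdered α] [NoMinOrder α] [NoMaxOrder α]
    [LinearOrder β] [TopologicalSpace β] [OrderTopology β]
    {H : α → β} {K : β → α} {I : Set α} {S : Set β} (hH : StrictAntiOn H I) (hI : IsOpen I)
    (hKI : MapsTo K S I) (hHK : LeftInvOn H K S) : ContinuousOn K S := by
  intro y hy
  obtain ⟨l, u, hlu, hsub⟩ := mem_nhds_iff_exists_Ioo_subset.1 (hI.mem_nhds (hKI hy))
  refine tendsto_order.2 ⟨fun x₁ hx₁ => ?_, fun x₂ hx₂ => ?_⟩
  · obtain ⟨z, hz, hzK⟩ := exists_between (max_lt hx₁ hlu.1)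
    have hzI : z ∈ I := hsub ⟨(le_max_right _ _).trans_lt hz, hzK.trans hlu.2⟩
    have hyz : y < H z := by rwa [← hHK hy, hH.lt_iff_gt (hKI hy) hzI]
    filter_upwards [nhdsWithin_le_nhds (eventually_lt_nhds hyz), self_mem_nhdsWithin]
      with w hw hwS
    rw [← hHK hwS, hH.lt_iff_gt (hKI hwS) hzI] at hw
    exact (le_max_left _ _).trans_lt (hz.trans hw)
  · obtain ⟨z, hKz, hz⟩ := exists_between (lt_min hx₂ hlu.2)
    have hzI : z ∈ I := hsub ⟨hlu.1.trans hKz, hz.trans_le (min_le_right _ _)⟩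
    have hyz : H z < y := by rwa [← hHK hy, hH.lt_iff_gt hzI (hKI hy)]
    filter_upwards [nhdsWithin_le_nhds (eventually_gt_nhds hyz), self_mem_nhdsWithin]
      with w hw hwS
    rw [← hHK hwS, hH.lt_iff_gt hzI (hKI hwS)] at hw
    exact hw.trans (hz.trans_le (min_le_left _ _))

theorem integrable_of_continuousOn_Icc {μ : Measure ℝ} [IsFiniteMeasure μ] {lmin lmax : ℝ}
    (hμ : ∀ᵐ l ∂μ, l ∈ Icc lmin lmax) {f : ℝ → ℝ} (hf : ContinuousOn f (Icc lmin lmax)) :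
    Integrable f μ := by
  rw [← Measure.restrict_eq_self_of_ae_mem hμ]
  exact hf.integrableOn_compact isCompact_Icc

theorem le_of_ae_mem_Icc {α : Type*} [LinearOrder α] [MeasurableSpace α] {μ : Measure α}
    [NeZero μ] {a b : α} (h : ∀ᵐ x ∂μ, x ∈ Icc a b) : a ≤ b :=
  let ⟨_, hx⟩ := h.exists
  hx.1.trans hx.2

theorem integral_mem_Icc_of_ae_mem {α : Type*} [MeasurableSpace α] {μ : Measure α}
    [IsProbabilityMeasure μ] {f : α → ℝ} {c d : ℝ} (hf : Integrable f μ)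
    (h : ∀ᵐ x ∂μ, f x ∈ Icc c d) : ∫ x, f x ∂μ ∈ Icc c d :=
  ⟨by simpa using integral_mono_ae (integrable_const c) hf (h.mono fun _ hx => hx.1),
    by simpa using integral_mono_ae hf (integrable_const d) (h.mono fun _ hx => hx.2)⟩

section Transforms

variable {μ : Measure ℝ} {lmin lmax x : ℝ}

noncomputable def hilbertTransform (μ : Measure ℝ) (x : ℝ) : ℝ := ∫ l, (x - l)⁻¹ ∂μ

noncomputable def logPotential (μ : Measure ℝ) (x : ℝ) : ℝ := ∫ l, Real.log (x - l) ∂μ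

theorem hasDerivAt_integral_comp_sub [IsFiniteMeasure μ] (hμ : ∀ᵐ l ∂μ, l ∈ Icc lmin lmax)
    {f f' : ℝ → ℝ} (hf : ∀ t > 0, HasDerivAt f (f' t) t) (hf' : ContinuousOn f' (Ioi 0))
    (hx : lmax < x) : HasDerivAt (fun y => ∫ l, f (y - l) ∂μ) (∫ l, f' (x - l) ∂μ) x := by
  have hsub : ∀ {y}, lmax < y → MapsTo (fun l => y - l) (Icc lmin lmax) (Ioi 0) :=
    fun hy l hl => sub_pos.2 (hl.2.trans_lt hy)
  have hint : ∀ {g : ℝ → ℝ}, ContinuousOn g (Ioi 0) → ∀ {y}, lmax < y →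
      Integrable (fun l => g (y - l)) μ := fun hg _ hy =>
    integrable_of_continuousOn_Icc hμ (hg.comp (continuousOn_const.sub continuousOn_id) (hsub hy))
  have hfc : ContinuousOn f (Ioi 0) := fun t ht => (hf t ht).continuousAt.continuousWithinAt
  -- For `y` near `x` and `l ∈ [lmin, lmax]`, `y - l` stays in a compact subset of `(0, ∞)`.
  obtain ⟨C, hC⟩ := isCompact_Icc.exists_bound_of_continuousOn
    (hf'.mono fun t (ht : t ∈ Icc ((x - lmax) / 2) (x + 1 - lmin)) =>
      (show (0 : ℝ) < t by linarith [ht.1]))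
  have hs : Ioo ((x + lmax) / 2) (x + 1) ∈ 𝓝 x := Ioo_mem_nhds (by linarith) (by linarith)
  refine (hasDerivAt_integral_of_dominated_loc_of_deriv_le (F' := fun y l => f' (y - l)) hs ?_
    (hint hfc hx) (hint hf' hx).aestronglyMeasurable ?_ (integrable_const C) ?_).2
  · filter_upwards [hs] with y hy using (hint hfc (by linarith [hy.1])).aestronglyMeasurable
  · filter_upwards [hμ] with l hl y hy
    exact hC _ ⟨by linarith [hy.1, hl.2], by linarith [hy.2, hl.1]⟩
  · filter_upwards [hμ] with l hl y hy
    exact (hf _ (hsub (by linarith [hy.1]) hl)).comp_sub_const y l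


theorem hasDerivAt_hilbertTransform [IsFiniteMeasure μ] (hμ : ∀ᵐ l ∂μ, l ∈ Icc lmin lmax)
    (hx : lmax < x) : HasDerivAt (hilbertTransform μ) (∫ l, -((x - l) ^ 2)⁻¹ ∂μ) x :=
  hasDerivAt_integral_comp_sub hμ (fun _ ht => hasDerivAt_inv ht.ne')
    ((continuousOn_pow 2).inv₀ fun _ ht => pow_ne_zero 2 (ne_of_gt ht)).neg hx

theorem hasDerivAt_logPotential [IsFiniteMeasure μ] (hμ : ∀ᵐ l ∂μ, l ∈ Icc lmin lmax)
    (hx : lmax < x) : HasDerivAt (logPotential μ) (hilbertTransform μ x) x :=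
  hasDerivAt_integral_comp_sub hμ (fun _ ht => Real.hasDerivAt_log ht.ne')
    (continuousOn_inv₀.mono fun _ ht => ne_of_gt ht) hx

theorem integral_neg_inv_sq_sub_neg [IsProbabilityMeasure μ] (hμ : ∀ᵐ l ∂μ, l ∈ Icc lmin lmax)
    (hx : lmax < x) : ∫ l, -((x - l) ^ 2)⁻¹ ∂μ < 0 := by
  have hpos : ∀ l ∈ Icc lmin lmax, 0 < x - l := fun l hl => by linarith [hl.2]
  have hint : Integrable (fun l => -((x - l) ^ 2)⁻¹) μ := integrable_of_continuousOn_Icc hμ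
    (((continuousOn_const.sub continuousOn_id).pow 2).inv₀
      fun l hl => pow_ne_zero 2 (hpos l hl).ne').neg
  have hbound : ∀ᵐ l ∂μ, -((x - l) ^ 2)⁻¹ ≤ -((x - lmin) ^ 2)⁻¹ := by
    filter_upwards [hμ] with l hl
    have := hpos l hl
    exact neg_le_neg (inv_anti₀ (by positivity) (by gcongr; exact hl.1))
  have hmin : 0 < x - lmin := by linarith [le_of_ae_mem_Icc hμ]
  calc ∫ l, -((x - l) ^ 2)⁻¹ ∂μ ≤ ∫ _, -((x - lmin) ^ 2)⁻¹ ∂μ :=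
        integral_mono_ae hint (integrable_const _) hbound
    _ = -((x - lmin) ^ 2)⁻¹ := by simp
    _ < 0 := neg_neg_of_pos (by positivity)

theorem hilbertTransform_mem_Icc [IsProbabilityMeasure μ] (hμ : ∀ᵐ l ∂μ, l ∈ Icc lmin lmax)
    (hx : x ∉ Icc lmin lmax) : hilbertTransform μ x ∈ Icc (x - lmin)⁻¹ (x - lmax)⁻¹ := by
  have hne : ∀ l ∈ Icc lmin lmax, x - l ≠ 0 := fun l hl h => hx (sub_eq_zero.1 h ▸ hl)
  refine integral_mem_Icc_of_ae_mem (integrable_of_continuousOn_Icc hμ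
    ((continuousOn_const.sub continuousOn_id).inv₀ hne)) ?_
  filter_upwards [hμ] with l hl
  rw [mem_Icc, not_and_or, not_le, not_le] at hx
  rcases hx with hx | hx
  · have : x - l < 0 := by linarith [hl.1]
    exact ⟨(inv_le_inv_of_neg (by linarith) this).2 (by linarith [hl.1]),
      (inv_le_inv_of_neg this (by linarith [hl.2])).2 (by linarith [hl.2])⟩
  · exact ⟨inv_anti₀ (by linarith [hl.2]) (by linarith [hl.1]),
      inv_anti₀ (by linarith) (by linarith [hl.2])⟩

theorem strictAntiOn_hilbertTransform [IsProbabilityMeasure μ]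
    (hμ : ∀ᵐ l ∂μ, l ∈ Icc lmin lmax) : StrictAntiOn (hilbertTransform μ) (Ioi lmax) :=
  strictAntiOn_of_deriv_neg (convex_Ioi lmax)
    (fun x hx => (hasDerivAt_hilbertTransform hμ hx).continuousAt.continuousWithinAt)
    fun x hx => by
      rw [interior_Ioi] at hx
      rw [(hasDerivAt_hilbertTransform hμ hx).deriv]
      exact integral_neg_inv_sq_sub_neg hμ hx

theorem hilbertTransform_ne_zero [IsProbabilityMeasure μ] (hμ : ∀ᵐ l ∂μ, l ∈ Icc lmin lmax)
    (hx : x ∉ Icc lmin lmax) : hilbertTransform μ x ≠ 0 := by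
  have hH := hilbertTransform_mem_Icc hμ hx
  have hle := le_of_ae_mem_Icc hμ
  simp only [mem_Icc, not_and_or, not_le] at hx
  rcases hx with hx | hx
  · exact (hH.2.trans_lt (inv_lt_zero.2 (by linarith))).ne
  · exact ((inv_pos.2 (by linarith)).trans_le hH.1).ne'

theorem lt_of_hilbertTransform_pos [IsProbabilityMeasure μ] (hμ : ∀ᵐ l ∂μ, l ∈ Icc lmin lmax)
    (hx : x ∉ Icc lmin lmax) (hpos : 0 < hilbertTransform μ x) : lmax < x := by
  have hH := (hilbertTransform_mem_Icc hμ hx).2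
  have hle := le_of_ae_mem_Icc hμ
  simp only [mem_Icc, not_and_or, not_le] at hx
  exact hx.resolve_left fun hlt => (hpos.trans_le hH).not_ge (inv_nonpos.2 (by linarith))

theorem sub_inv_hilbertTransform_mem_Icc [IsProbabilityMeasure μ]
    (hμ : ∀ᵐ l ∂μ, l ∈ Icc lmin lmax) (hx : lmax < x) :
    x - (hilbertTransform μ x)⁻¹ ∈ Icc lmin lmax := by
  obtain ⟨hlow, hup⟩ := hilbertTransform_mem_Icc hμ (fun h => h.2.not_gt hx)
  have h₁ : 0 < x - lmin := by linarith [le_of_ae_mem_Icc hμ]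
  have hH : 0 < hilbertTransform μ x := (inv_pos.2 h₁).trans_le hlow
  constructor
  · linarith [(inv_le_comm₀ h₁ hH).1 hlow]
  · linarith [(le_inv_comm₀ hH (sub_pos.2 hx)).1 hup]

theorem log_add_logPotential [IsProbabilityMeasure μ] (hμ : ∀ᵐ l ∂μ, l ∈ Icc lmin lmax)
    {γ : ℝ} (hγ : 0 < γ) (hx : lmax < x) :
    Real.log γ + logPotential μ x = ∫ l, Real.log (γ * (x - l)) ∂μ := by
  have hlog : ContinuousOn (fun l => Real.log (x - l)) (Icc lmin lmax) :=
    (continuousOn_const.sub continuousOn_id).log fun l hl => by simp; linarith [hl.2]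
  have hsplit : (fun l => Real.log (γ * (x - l))) =ᵐ[μ] fun l => Real.log γ + Real.log (x - l) := by
    filter_upwards [hμ] with l hl
    rw [Real.log_mul hγ.ne' (by linarith [hl.2])]
  rw [integral_congr_ae hsplit, integral_add (integrable_const _)
    (integrable_of_continuousOn_Icc hμ hlog)]
  simp [logPotential]

end Transforms

section InverseHilbert

variable {μ : Measure ℝ} [IsProbabilityMeasure μ] {lmin lmax a : ℝ} {K : ℝ → ℝ}

noncomputable def rTransformPrimitive (μ : Measure ℝ) (K : ℝ → ℝ) (γ : ℝ) : ℝ :=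
  γ * K γ - Real.log γ - logPotential μ (K γ)

theorem continuousOn_of_leftInvOn_hilbertTransform {S : Set ℝ} (hμ : ∀ᵐ l ∂μ, l ∈ Icc lmin lmax)
    (hKI : MapsTo K S (Ioi lmax)) (hHK : LeftInvOn (hilbertTransform μ) K S) :
    ContinuousOn K S :=
  (strictAntiOn_hilbertTransform hμ).continuousOn_of_leftInvOn isOpen_Ioi hKI hHK

theorem hasDerivAt_of_leftInvOn_hilbertTransform (hμ : ∀ᵐ l ∂μ, l ∈ Icc lmin lmax)
    (hKI : MapsTo K (Ioc 0 a) (Ioi lmax)) (hHK : LeftInvOn (hilbertTransform μ) K (Ioc 0 a))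
    {γ : ℝ} (hγ : γ ∈ Ioo 0 a) :
    HasDerivAt K (∫ l, -((K γ - l) ^ 2)⁻¹ ∂μ)⁻¹ γ := by
  have hx : lmax < K γ := hKI (Ioo_subset_Ioc_self hγ)
  exact HasDerivAt.of_local_left_inverse ((continuousOn_of_leftInvOn_hilbertTransform hμ hKI
    hHK).continuousAt (Ioc_mem_nhds hγ.1 hγ.2)) (hasDerivAt_hilbertTransform hμ hx)
    (integral_neg_inv_sq_sub_neg hμ hx).ne
    (eventually_of_mem (Ioc_mem_nhds hγ.1 hγ.2) hHK)

theorem hasDerivAt_rTransformPrimitive (hμ : ∀ᵐ l ∂μ, l ∈ Icc lmin lmax)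
    (hKI : MapsTo K (Ioc 0 a) (Ioi lmax)) (hHK : LeftInvOn (hilbertTransform μ) K (Ioc 0 a))
    {γ : ℝ} (hγ : γ ∈ Ioo 0 a) :
    HasDerivAt (rTransformPrimitive μ K) (K γ - γ⁻¹) γ := by
  have hγ' : γ ∈ Ioc 0 a := Ioo_subset_Ioc_self hγ
  have hK := hasDerivAt_of_leftInvOn_hilbertTransform hμ hKI hHK hγ
  have hΨ := (((hasDerivAt_id' γ).mul hK).sub (Real.hasDerivAt_log hγ.1.ne')).sub
    ((hasDerivAt_logPotential hμ (hKI hγ')).comp γ hK)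
  exact hΨ.congr_deriv (by rw [hHK hγ']; ring)

theorem continuousOn_rTransformPrimitive (hμ : ∀ᵐ l ∂μ, l ∈ Icc lmin lmax)
    (hKI : MapsTo K (Ioc 0 a) (Ioi lmax)) (hHK : LeftInvOn (hilbertTransform μ) K (Ioc 0 a)) :
    ContinuousOn (rTransformPrimitive μ K) (Ioc 0 a) := by
  have hK := continuousOn_of_leftInvOn_hilbertTransform hμ hKI hHK
  have hL : ContinuousOn (logPotential μ) (Ioi lmax) := fun x hx =>
    (hasDerivAt_logPotential hμ hx).continuousAt.continuousWithinAt
  exact ((continuousOn_id.mul hK).sub (Real.continuousOn_log.mono fun γ hγ => hγ.1.ne')).sub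
    (hL.comp hK hKI)

theorem sub_inv_mem_Icc_of_leftInvOn_hilbertTransform {S : Set ℝ}
    (hμ : ∀ᵐ l ∂μ, l ∈ Icc lmin lmax) (hKI : MapsTo K S (Ioi lmax))
    (hHK : LeftInvOn (hilbertTransform μ) K S) {γ : ℝ} (hγ : γ ∈ S) :
    K γ - γ⁻¹ ∈ Icc lmin lmax := by
  simpa only [hHK hγ] using sub_inv_hilbertTransform_mem_Icc hμ (hKI hγ)

theorem intervalIntegrable_of_leftInvOn_hilbertTransform (hμ : ∀ᵐ l ∂μ, l ∈ Icc lmin lmax)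
    (ha : 0 < a) (hKI : MapsTo K (Ioc 0 a) (Ioi lmax))
    (hHK : LeftInvOn (hilbertTransform μ) K (Ioc 0 a)) :
    IntervalIntegrable (fun γ => K γ - γ⁻¹) volume 0 a := by
  rw [intervalIntegrable_iff_integrableOn_Ioc_of_le ha.le]
  refine Integrable.mono' (integrable_const (max |lmin| |lmax|))
    (((continuousOn_of_leftInvOn_hilbertTransform hμ hKI hHK).sub
      (continuousOn_inv₀.mono fun γ hγ => hγ.1.ne')).aestronglyMeasurable measurableSet_Ioc)
    (ae_restrict_of_forall_mem measurableSet_Ioc fun γ hγ => ?_)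
  obtain ⟨hlow, hup⟩ := sub_inv_mem_Icc_of_leftInvOn_hilbertTransform hμ hKI hHK hγ
  exact abs_le_max_abs_abs hlow hup

theorem tendsto_mul_of_leftInvOn_hilbertTransform (hμ : ∀ᵐ l ∂μ, l ∈ Icc lmin lmax)
    (ha : 0 < a) (hKI : MapsTo K (Ioc 0 a) (Ioi lmax))
    (hHK : LeftInvOn (hilbertTransform μ) K (Ioc 0 a)) :
    Tendsto (fun γ => γ * K γ) (𝓝[>] 0) (𝓝 1) := by
  have hlim : ∀ c : ℝ, Tendsto (fun γ => 1 + γ * c) (𝓝[>] 0) (𝓝 1) := fun c => by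
    have hγ : Tendsto (fun γ : ℝ => γ) (𝓝[>] 0) (𝓝 0) := nhdsWithin_le_nhds
    simpa using (hγ.mul_const c).const_add 1
  have hbounds : ∀ᶠ γ in 𝓝[>] 0, γ * K γ ∈ Icc (1 + γ * lmin) (1 + γ * lmax) := by
    filter_upwards [Ioo_mem_nhdsGT ha] with γ hγ
    obtain ⟨hlow, hup⟩ :=
      sub_inv_mem_Icc_of_leftInvOn_hilbertTransform hμ hKI hHK (Ioo_subset_Ioc_self hγ)
    have hγK : γ * K γ = 1 + γ * (K γ - γ⁻¹) := by rw [mul_sub, mul_inv_cancel₀ hγ.1.ne']; ring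
    rw [hγK]
    exact ⟨by gcongr; exact hγ.1.le, by gcongr; exact hγ.1.le⟩
  exact tendsto_of_tendsto_of_tendsto_of_le_of_le' (hlim lmin) (hlim lmax)
    (hbounds.mono fun _ h => h.1) (hbounds.mono fun _ h => h.2)

theorem tendsto_integral_log_mul_sub (hμ : ∀ᵐ l ∂μ, l ∈ Icc lmin lmax)
    (hK : ∀ᶠ γ in 𝓝[>] 0, lmax < K γ) (hlim : Tendsto (fun γ => γ * K γ) (𝓝[>] 0) (𝓝 1)) :
    Tendsto (fun γ => ∫ l, Real.log (γ * (K γ - l)) ∂μ) (𝓝[>] 0) (𝓝 0) := by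
  have hend : ∀ c : ℝ, Tendsto (fun γ => Real.log (γ * (K γ - c))) (𝓝[>] 0) (𝓝 0) := fun c => by
    have hγ : Tendsto (fun γ : ℝ => γ) (𝓝[>] 0) (𝓝 0) := nhdsWithin_le_nhds
    simpa [mul_sub] using (hlim.sub (hγ.mul_const c)).log (by norm_num)
  have hbounds : ∀ᶠ γ in 𝓝[>] 0, ∫ l, Real.log (γ * (K γ - l)) ∂μ ∈
      Icc (Real.log (γ * (K γ - lmax))) (Real.log (γ * (K γ - lmin))) := by
    filter_upwards [hK, self_mem_nhdsWithin] with γ hKγ (hγ : 0 < γ)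
    have hpos : ∀ l ∈ Icc lmin lmax, 0 < γ * (K γ - l) := fun l hl =>
      mul_pos hγ (by linarith [hl.2])
    refine integral_mem_Icc_of_ae_mem (integrable_of_continuousOn_Icc hμ
      ((continuousOn_const.mul (continuousOn_const.sub continuousOn_id)).log
        fun l hl => (hpos l hl).ne')) ?_
    filter_upwards [hμ] with l hl
    exact ⟨Real.log_le_log (mul_pos hγ (by linarith)) (by gcongr; exact hl.2),
      Real.log_le_log (hpos l hl) (by gcongr; exact hl.1)⟩
  exact tendsto_of_tendsto_of_tendsto_of_le_of_le' (hend lmax) (hend lmin)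
    (hbounds.mono fun _ h => h.1) (hbounds.mono fun _ h => h.2)

theorem tendsto_rTransformPrimitive (hμ : ∀ᵐ l ∂μ, l ∈ Icc lmin lmax)
    (ha : 0 < a) (hKI : MapsTo K (Ioc 0 a) (Ioi lmax))
    (hHK : LeftInvOn (hilbertTransform μ) K (Ioc 0 a)) :
    Tendsto (rTransformPrimitive μ K) (𝓝[>] 0) (𝓝 1) := by
  have hmem : ∀ᶠ γ in 𝓝[>] 0, γ ∈ Ioc 0 a :=
    mem_of_superset (Ioo_mem_nhdsGT ha) Ioo_subset_Ioc_self
  have hlim := tendsto_mul_of_leftInvOn_hilbertTransform hμ ha hKI hHK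
  have := hlim.sub (tendsto_integral_log_mul_sub hμ (hmem.mono fun _ hγ => hKI hγ) hlim)
  rw [sub_zero] at this
  refine this.congr' ?_
  filter_upwards [hmem] with γ hγ
  rw [rTransformPrimitive, sub_sub, log_add_logPotential hμ hγ.1 (hKI hγ)]

theorem integral_eq_of_leftInvOn_hilbertTransform (hμ : ∀ᵐ l ∂μ, l ∈ Icc lmin lmax)
    (ha : 0 < a) (hKI : MapsTo K (Ioc 0 a) (Ioi lmax))
    (hHK : LeftInvOn (hilbertTransform μ) K (Ioc 0 a)) {R : ℝ → ℝ}
    (hR : EqOn R (fun γ => K γ - γ⁻¹) (Ioc 0 a)) :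
    ∫ u in 0..a, R u = a * R a - ∫ l, Real.log (1 - a * l + a * R a) ∂μ := by
  have ha' : a ∈ Ioc 0 a := ⟨ha, le_rfl⟩
  have hFTC := integral_eq_sub_of_hasDerivAt_of_tendsto ha
    (fun γ hγ => (hasDerivAt_rTransformPrimitive hμ hKI hHK hγ).congr_deriv
      (hR (Ioo_subset_Ioc_self hγ)).symm)
    ((intervalIntegrable_of_leftInvOn_hilbertTransform hμ ha hKI hHK).congr
      (hR.symm.mono (uIoc_of_le ha.le).subset))
    (tendsto_rTransformPrimitive hμ ha hKI hHK)
    (((continuousOn_rTransformPrimitive hμ hKI hHK).continuousWithinAt ha').mono_of_mem_nhdsWithin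
      (Ioc_mem_nhdsLT ha)).tendsto
  have harg : ∀ l, 1 - a * l + a * R a = a * (K a - l) := fun l => by
    rw [hR ha', mul_sub, mul_inv_cancel₀ ha.ne']; ring
  simp_rw [hFTC, harg, rTransformPrimitive, ← log_add_logPotential hμ ha (hKI ha'), hR ha',
    mul_sub, mul_inv_cancel₀ ha.ne']
  ring

end InverseHilbert

theorem primitive_of_R_transform_identity_general
    (μ : Measure ℝ) [IsProbabilityMeasure μ] (lmin lmax θ : ℝ)
    (hsupp : μ (Set.Icc lmin lmax)ᶜ = 0)
    (K R : ℝ → ℝ)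
    (hK : ∀ γ ∈ Set.uIoc (0 : ℝ) (2 * θ),
      K γ ∉ Set.Icc lmin lmax ∧ (∫ l, (K γ - l)⁻¹ ∂μ) = γ ∧ R γ = K γ - γ⁻¹)
    (v : ℝ) (hv : v = R (2 * θ)) :
    θ * v - (1 / 2) * ∫ l, Real.log (1 - 2 * θ * l + 2 * θ * v) ∂μ
      = (1 / 2) * ∫ u in (0 : ℝ)..(2 * θ), R u := by
  have hμ : ∀ᵐ l ∂μ, l ∈ Icc lmin lmax := ae_iff.2 hsupp
  rcases lt_trichotomy θ 0 with hθ | rfl | hθ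
  · obtain ⟨hK0, hH0, -⟩ := hK 0 (mem_uIoc.2 (Or.inr ⟨by linarith, le_rfl⟩))
    exact absurd hH0 (hilbertTransform_ne_zero hμ hK0)
  · simp
  · have ha : 0 < 2 * θ := by linarith
    rw [uIoc_of_le ha.le] at hK
    have hHK : LeftInvOn (hilbertTransform μ) K (Ioc 0 (2 * θ)) := fun γ hγ => (hK γ hγ).2.1
    have hKI : MapsTo K (Ioc 0 (2 * θ)) (Ioi lmax) := fun γ hγ =>
      lt_of_hilbertTransform_pos hμ (hK γ hγ).1 (by rw [hHK hγ]; exact hγ.1)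
    rw [integral_eq_of_leftInvOn_hilbertTransform hμ ha hKI hHK fun γ hγ => (hK γ hγ).2.2, ← hv]
    ring

/-- For a compactly supported probability measure `μ` with support in
`[λmin, λmax]` and `2θ` in the image `H_μ([λmin,λmax]ᶜ)`, with `v = R_μ(2θ)`,
the identity
`θv - (1/2)∫ log(1 - 2θλ + 2θv) dμ(λ) = (1/2)∫₀^{2θ} R_μ(u) du`
holds.  Here `K` is the inverse of the Hilbert transform `H_μ` and
`R γ = K γ - 1/γ` on the (punctured) interval between `0` and `2θ`;
`2θ ∈ H_μ([λmin,λmax]ᶜ)` is encoded by `hK` applied to `γ = 2θ`, and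
`1 - 2θλ + 2θv = 2θ(K_μ(2θ) - λ) > 0` on the support of `μ`. -/
theorem primitive_of_R_transform_identity
    (μ : Measure ℝ) [IsProbabilityMeasure μ] (lmin lmax θ : ℝ) (hθ : θ ≠ 0)
    (hsupp : μ (Set.Icc lmin lmax)ᶜ = 0)
    (K R : ℝ → ℝ)
    (hK : ∀ γ ∈ Set.uIoc (0 : ℝ) (2 * θ),
      K γ ∉ Set.Icc lmin lmax ∧ (∫ l, (K γ - l)⁻¹ ∂μ) = γ ∧ R γ = K γ - γ⁻¹)
    (v : ℝ) (hv : v = R (2 * θ))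
    (hpos : ∀ l ∈ Set.Icc lmin lmax, 0 < 1 - 2 * θ * l + 2 * θ * v) :
    θ * v - (1 / 2) * ∫ l, Real.log (1 - 2 * θ * l + 2 * θ * v) ∂μ
      = (1 / 2) * ∫ u in (0 : ℝ)..(2 * θ), R u :=
  primitive_of_R_transform_identity_general μ lmin lmax θ hsupp K R hK v hv
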